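/- For every alternating non-crossing partition (P, X) of [m'] ∪ [m], the set of arcs U_{(P,X)} ∩ A satisfies the PC conditions. -/
import Mathlib


namespace PY

/-! ### The ∞-gon `Z_{2m}`

Labels are elements of `Fin (2 * m)`, ordered `1' < 1 < 2' < 2 < ⋯ < m' < m`:
the label `2 * i` is the primed (accumulation-point) label `(i+1)'` and the label
`2 * i + 1` is the unprimed label `i + 1`.  A point of `Z_{2m}` is a pair of a label and
an integer. -/

/-- Points of the ∞-gon `Z_{2m}`: a label and an integer. -/
abbrev Pt (m : ℕ) := Fin (2 * m) × ℤ

/-- Cyclic successor of a label. -/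
def cycSucc {n : ℕ} (r : Fin n) : Fin n := ⟨(r.1 + 1) % n, Nat.mod_lt _ r.pos⟩

/-- Cyclic predecessor of a label. -/
def cycPred {n : ℕ} (r : Fin n) : Fin n := ⟨(r.1 + (n - 1)) % n, Nat.mod_lt _ r.pos⟩

/-- Strict lexicographic order on the points of `Z_{2m}`. -/
def ptLt {m : ℕ} (a b : Pt m) : Prop := a.1 < b.1 ∨ (a.1 = b.1 ∧ a.2 < b.2)

/-- `sort2 a b` is the pair `(a, b)` arranged in (weakly) increasing lexicographic
order; it realizes the notation `|a, b|` for the arc connecting two points. -/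
def sort2 {m : ℕ} (a b : Pt m) : Pt m × Pt m :=
  if a.1 < b.1 ∨ (a.1 = b.1 ∧ a.2 ≤ b.2) then (a, b) else (b, a)

/-- An ordered pair of points of `Z_{2m}` is an arc when its endpoints are in increasing
lexicographic order and, if they lie in the same copy of `ℤ`, differ by at least `2`. -/
def IsArc {m : ℕ} (x : Pt m × Pt m) : Prop :=
  ptLt x.1 x.2 ∧ (x.1.1 = x.2.1 → x.1.2 + 2 ≤ x.2.2)

/-- The precovering conditions (PC conditions) for a set of arcs of `Z_{2m}`. -/
structure PCcond {m : ℕ} (U : Set (Pt m × Pt m)) : Prop where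
  pc1 : ∀ p q : Fin (2 * m), p ≠ q → ∀ x1 x2 : ℕ → ℤ, StrictMono x1 → StrictMono x2 →
    (∀ n, ((p, x1 n), (q, x2 n)) ∈ U) →
    ∃ y1 y2 : ℕ → ℤ, StrictAnti y1 ∧ StrictAnti y2 ∧
      ∀ n, sort2 (cycSucc p, y1 n) (cycSucc q, y2 n) ∈ U
  pc2 : ∀ p q : Fin (2 * m), p ≠ cycSucc q → ∀ x1 x2 : ℕ → ℤ,
    StrictAnti x1 → StrictMono x2 →
    (∀ n, ((p, x1 n), (q, x2 n)) ∈ U) →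
    ∃ y1 y2 : ℕ → ℤ, StrictAnti y1 ∧ StrictAnti y2 ∧
      ∀ n, sort2 (p, y1 n) (cycSucc q, y2 n) ∈ U
  pc2' : ∀ p q : Fin (2 * m), q ≠ cycSucc p → p ≠ q → ∀ x1 x2 : ℕ → ℤ,
    StrictMono x1 → StrictAnti x2 →
    (∀ n, ((p, x1 n), (q, x2 n)) ∈ U) →
    ∃ y1 y2 : ℕ → ℤ, StrictAnti y1 ∧ StrictAnti y2 ∧
      ∀ n, sort2 (cycSucc p, y1 n) (q, y2 n) ∈ U
  pc3 : ∀ p q : Fin (2 * m), ∀ (x1 : ℤ) (x2 : ℕ → ℤ), StrictMono x2 →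
    (∀ n, ((p, x1), (q, x2 n)) ∈ U) →
    ∃ y2 : ℕ → ℤ, StrictAnti y2 ∧ ∀ n, sort2 (p, x1) (cycSucc q, y2 n) ∈ U
  pc3' : ∀ p q : Fin (2 * m), p ≠ q → ∀ (x1 : ℕ → ℤ) (x2 : ℤ), StrictMono x1 →
    (∀ n, ((p, x1 n), (q, x2)) ∈ U) →
    ∃ y1 : ℕ → ℤ, StrictAnti y1 ∧ ∀ n, sort2 (cycSucc p, y1 n) (q, x2) ∈ U

/-- A point is admissible for the subcategory `A`: its label is unprimed, or it is a
point `(q, n)` of a primed copy with `n ≤ z0`. -/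
def memA {m : ℕ} (z0 : ℤ) (a : Pt m) : Prop :=
  a.1.1 % 2 = 1 ∨ (a.1.1 % 2 = 0 ∧ a.2 ≤ z0)

/-- The set of arcs `A` determined by the choice of `z0`. -/
def setA (m : ℕ) (z0 : ℤ) : Set (Pt m × Pt m) :=
  {x | memA z0 x.1 ∧ memA z0 x.2}

/-! ### Decorations

The linearly ordered set `{p} ∪ Z^(p) ∪ {p⁺}` is modelled as `WithBot (WithTop ℤ)`:
`⊥` is the accumulation point `p`, an integer `n` is the point `n` of `Z^(p)`, and the
top element is the accumulation point `p⁺`. -/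

/-- The linearly ordered set `{p} ∪ Z^(p) ∪ {p⁺}`. -/
abbrev Dm := WithBot (WithTop ℤ)

/-- An integer, viewed in `{p} ∪ Z^(p) ∪ {p⁺}`. -/
def toDm (n : ℤ) : Dm := ((n : WithTop ℤ) : Dm)

/-- The element `p⁺` of `{p} ∪ Z^(p) ∪ {p⁺}`. -/
def topDm : Dm := ((⊤ : WithTop ℤ) : Dm)

/-- The unprimed label `p ∈ [m]` with index `i`. -/
def unpr {m : ℕ} (i : Fin m) : Fin (2 * m) := ⟨2 * i.1 + 1, by have := i.2; omega⟩

/-- The primed label `p' ∈ [m']` with index `i`. -/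
def prim {m : ℕ} (i : Fin m) : Fin (2 * m) := ⟨2 * i.1, by have := i.2; omega⟩

/-- Four points of `Fin n` (viewed on a circle with its natural cyclic order) are in
(strict, anticlockwise) cyclic order. -/
def Cyc4 {n : ℕ} (a b c d : Fin n) : Prop :=
  (a < b ∧ b < c ∧ c < d) ∨ (b < c ∧ c < d ∧ d < a) ∨
  (c < d ∧ d < a ∧ a < b) ∨ (d < a ∧ a < b ∧ b < c)

/-- A partition (setoid) of `Fin n` is non-crossing if there are no elements
`i1, j1, i2, j2` in cyclic order with `i1, i2` in one block and `j1, j2` in a different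
block. -/
def IsNoncrossing {n : ℕ} (P : Setoid (Fin n)) : Prop :=
  ∀ i1 j1 i2 j2 : Fin n, Cyc4 i1 j1 i2 j2 → P.r i1 i2 → P.r j1 j2 → P.r i1 j1

/-! ### Alternating non-crossing partitions and the arc sets `U_{(P,X)}` -/

/-- A point of `Z_{2m}` belongs to the interval `[x_{p⁻}, p⁺)` attached to the primed
label `p' ∈ [m']` of index `j`: it lies in the primed copy `Z^(p)`, or in the unprimed
copy `Z^(p⁻)` above the decoration `x_{p⁻}`. -/
def altRegion {m : ℕ} (x : Fin m → Dm) (j : Fin m) (a : Pt m) : Prop :=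
  a.1 = prim j ∨ (a.1 = unpr (cycPred j) ∧ x (cycPred j) ≤ toDm a.2)

/-- The set of arcs `U_{(P,X)}` associated with an alternating non-crossing partition
`(P, X)`: arcs both of whose endpoints lie in `⋃_{p ∈ B} [x_{p⁻}, p⁺)` for a single
block `B` of `P`. -/
def altU {m : ℕ} (P : Setoid (Fin m)) (x : Fin m → Dm) : Set (Pt m × Pt m) :=
  {a | IsArc a ∧ ∃ b : Fin m,
    (∃ j, P.r b j ∧ altRegion x j a.1) ∧ (∃ j, P.r b j ∧ altRegion x j a.2)}



lemma mono_lower (x2 : ℕ → ℤ) (h : StrictMono x2) : ∀ n : ℕ, x2 0 + n ≤ x2 n := by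
  intro n
  induction n with
  | zero => simp
  | succ k ih =>
    have h' : x2 k < x2 (k + 1) := h (by omega)
    push_cast
    push_cast at ih
    omega

lemma odd_of_mono {m : ℕ} {z0 : ℤ} {q : Fin (2*m)} {x2 : ℕ → ℤ} (h : StrictMono x2)
    (hA : ∀ n, memA z0 (q, x2 n)) : q.1 % 2 = 1 := by
  by_contra h0
  have hb : ∀ n, x2 n ≤ z0 := by
    intro n
    rcases hA n with h' | h'
    · exact absurd h' h0
    · exact h'.2
  set n := (z0 + 1 - x2 0).toNat with hn
  have h1 := mono_lower x2 h n
  have h2 := hb n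
  have h3 : (z0 + 1 - x2 0) ≤ (n : ℤ) := Int.self_le_toNat _
  omega

lemma cycSucc_inj {n : ℕ} {p q : Fin n} (h : cycSucc p = cycSucc q) : p = q := by
  have h' : (p.1 + 1) % n = (q.1 + 1) % n := congrArg Fin.val h
  have hp := p.2; have hq := q.2
  apply Fin.ext
  rcases Nat.lt_or_ge (p.1 + 1) n with h1 | h1 <;> rcases Nat.lt_or_ge (q.1 + 1) n with h2 | h2
  · rw [Nat.mod_eq_of_lt h1, Nat.mod_eq_of_lt h2] at h'; omega
  · have hq1 : q.1 + 1 = n := by omega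
    rw [Nat.mod_eq_of_lt h1, hq1, Nat.mod_self] at h'; omega
  · have hp1 : p.1 + 1 = n := by omega
    rw [Nat.mod_eq_of_lt h2, hp1, Nat.mod_self] at h'; omega
  · omega

lemma region_succ {m : ℕ} (x : Fin m → Dm) {q : Fin (2*m)} (hq : q.1 % 2 = 1)
    {j : Fin m} {c : ℤ} (h : altRegion x j (q, c)) (d : ℤ) :
    altRegion x j (cycSucc q, d) ∧ (cycSucc q).1 % 2 = 0 := by
  rcases h with h | ⟨h, -⟩
  · exfalso
    have : q.1 = 2 * j.1 := congrArg Fin.val h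
    omega
  · have hq1 : q.1 = 2 * ((j.1 + (m-1)) % m) + 1 := congrArg Fin.val h
    have hjm := j.2
    have key : (cycSucc q).1 = 2 * j.1 := by
      show (q.1 + 1) % (2*m) = 2 * j.1
      rcases Nat.eq_zero_or_pos j.1 with h0 | hpos
      · have hmod : (j.1 + (m-1)) % m = m - 1 := by
          rw [h0, Nat.zero_add]; exact Nat.mod_eq_of_lt (by omega)
        have h2m : 2 * ((j.1 + (m-1)) % m) + 1 + 1 = 2 * m := by rw [hmod]; omega
        rw [hq1, h2m, Nat.mod_self, h0]
      · have hmod : (j.1 + (m-1)) % m = j.1 - 1 := by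
          have he : j.1 + (m - 1) = (j.1 - 1) + m := by omega
          rw [he, Nat.add_mod_right]; exact Nat.mod_eq_of_lt (by omega)
        have h2 : 2 * ((j.1 + (m-1)) % m) + 1 + 1 = 2 * j.1 := by rw [hmod]; omega
        rw [hq1, h2]; exact Nat.mod_eq_of_lt (by omega)
    refine ⟨Or.inl (Fin.ext key), by omega⟩

lemma sort2_mem {m : ℕ} {P : Setoid (Fin m)} {x : Fin m → Dm} {z0 : ℤ}
    {a b : Pt m} (bk : Fin m) (j1 j2 : Fin m)
    (hb1 : P.r bk j1) (hb2 : P.r bk j2)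
    (hr1 : altRegion x j1 a) (hr2 : altRegion x j2 b)
    (hA1 : memA z0 a) (hA2 : memA z0 b)
    (hne : a.1 ≠ b.1 ∨ a.2 + 2 ≤ b.2 ∨ b.2 + 2 ≤ a.2) :
    sort2 a b ∈ altU P x ∩ setA m z0 := by
  unfold sort2
  split
  case isTrue h =>
    refine ⟨⟨⟨?_, ?_⟩, bk, ⟨j1, hb1, hr1⟩, ⟨j2, hb2, hr2⟩⟩, hA1, hA2⟩
    · show a.1 < b.1 ∨ (a.1 = b.1 ∧ a.2 < b.2)
      rcases h with h | ⟨he, hle⟩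
      · exact Or.inl h
      · refine Or.inr ⟨he, ?_⟩
        rcases hne with hne | hne | hne
        · exact absurd he hne
        · omega
        · omega
    · intro he
      show a.2 + 2 ≤ b.2
      rcases h with h | ⟨-, hle⟩
      · exact absurd he (ne_of_lt h)
      · rcases hne with hne | hne | hne
        · exact absurd he hne
        · exact hne
        · omega
  case isFalse h =>
    push_neg at h
    obtain ⟨h1, h2⟩ := h
    refine ⟨⟨⟨?_, ?_⟩, bk, ⟨j2, hb2, hr2⟩, ⟨j1, hb1, hr1⟩⟩, hA2, hA1⟩
    · show b.1 < a.1 ∨ (b.1 = a.1 ∧ b.2 < a.2)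
      rcases lt_or_eq_of_le h1 with hlt | heq
      · exact Or.inl hlt
      · exact Or.inr ⟨heq, h2 heq.symm⟩
    · intro he
      show b.2 + 2 ≤ a.2
      have hba := h2 he.symm
      rcases hne with hne | hne | hne
      · exact absurd he.symm hne
      · omega
      · exact hne

lemma anti_sub (z : ℤ) : StrictAnti (fun n : ℕ => z - n) := by
  intro a b hab
  dsimp only
  omega


end PY

/-!
STATEMENT 15: For every alternating non-crossing partition (P, X) of [m'] ∪ [m], the set
of arcs U_{(P,X)} ∩ A satisfies the PC conditions.
-/

open PY in
theorem altU_inter_A_satisfies_PC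
    (m : ℕ) (hm : 0 < m) (z0 : ℤ)
    (P : Setoid (Fin m)) (x : Fin m → Dm) (hP : IsNoncrossing P) :
    PCcond (altU P x ∩ setA m z0) := by
  constructor
  · -- pc1
    intro p q hpq x1 x2 h1 h2 hU
    have hA1 : ∀ n, memA z0 (p, x1 n) := fun n => (hU n).2.1
    have hA2 : ∀ n, memA z0 (q, x2 n) := fun n => (hU n).2.2
    have hp : p.1 % 2 = 1 := odd_of_mono h1 hA1
    have hq : q.1 % 2 = 1 := odd_of_mono h2 hA2
    obtain ⟨-, b, ⟨j1, hb1, hr1⟩, ⟨j2, hb2, hr2⟩⟩ := (hU 0).1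
    refine ⟨fun n => z0 - n, fun n => z0 - n, anti_sub z0, anti_sub z0, fun n => ?_⟩
    dsimp only
    obtain ⟨hr1', hp1'⟩ := region_succ x hp hr1 (z0 - n)
    obtain ⟨hr2', hp2'⟩ := region_succ x hq hr2 (z0 - n)
    exact sort2_mem b j1 j2 hb1 hb2 hr1' hr2'
      (Or.inr ⟨hp1', show z0 - (n:ℤ) ≤ z0 by omega⟩)
      (Or.inr ⟨hp2', show z0 - (n:ℤ) ≤ z0 by omega⟩)
      (Or.inl fun hc => hpq (cycSucc_inj hc))
  · -- pc2
    intro p q hpq x1 x2 h1 h2 hU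
    have hA1 : ∀ n, memA z0 (p, x1 n) := fun n => (hU n).2.1
    have hA2 : ∀ n, memA z0 (q, x2 n) := fun n => (hU n).2.2
    have hq : q.1 % 2 = 1 := odd_of_mono h2 hA2
    refine ⟨x1, fun n => z0 - n, h1, anti_sub z0, fun n => ?_⟩
    dsimp only
    obtain ⟨-, b, ⟨j1, hb1, hr1⟩, ⟨j2, hb2, hr2⟩⟩ := (hU n).1
    obtain ⟨hr2', hp2'⟩ := region_succ x hq hr2 (z0 - n)
    exact sort2_mem b j1 j2 hb1 hb2 hr1 hr2' (hA1 n)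
      (Or.inr ⟨hp2', show z0 - (n:ℤ) ≤ z0 by omega⟩) (Or.inl hpq)
  · -- pc2'
    intro p q hqp hpq x1 x2 h1 h2 hU
    have hA1 : ∀ n, memA z0 (p, x1 n) := fun n => (hU n).2.1
    have hA2 : ∀ n, memA z0 (q, x2 n) := fun n => (hU n).2.2
    have hp : p.1 % 2 = 1 := odd_of_mono h1 hA1
    refine ⟨fun n => z0 - n, x2, anti_sub z0, h2, fun n => ?_⟩
    dsimp only
    obtain ⟨-, b, ⟨j1, hb1, hr1⟩, ⟨j2, hb2, hr2⟩⟩ := (hU n).1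
    obtain ⟨hr1', hp1'⟩ := region_succ x hp hr1 (z0 - n)
    exact sort2_mem b j1 j2 hb1 hb2 hr1' hr2
      (Or.inr ⟨hp1', show z0 - (n:ℤ) ≤ z0 by omega⟩) (hA2 n)
      (Or.inl fun hc => hqp hc.symm)
  · -- pc3
    intro p q x1 x2 h2 hU
    have hA1 : memA z0 (p, x1) := (hU 0).2.1
    have hA2 : ∀ n, memA z0 (q, x2 n) := fun n => (hU n).2.2
    have hq : q.1 % 2 = 1 := odd_of_mono h2 hA2
    refine ⟨fun n => min z0 (x1 - 2) - n, anti_sub _, fun n => ?_⟩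
    dsimp only
    obtain ⟨-, b, ⟨j1, hb1, hr1⟩, ⟨j2, hb2, hr2⟩⟩ := (hU n).1
    obtain ⟨hr2', hp2'⟩ := region_succ x hq hr2 (min z0 (x1 - 2) - n)
    refine sort2_mem b j1 j2 hb1 hb2 hr1 hr2' hA1
      (Or.inr ⟨hp2', show min z0 (x1 - 2) - (n:ℤ) ≤ z0 by
        have := min_le_left z0 (x1 - 2); omega⟩) ?_
    rcases eq_or_ne p (cycSucc q) with he | he
    · exact Or.inr (Or.inr (show min z0 (x1 - 2) - (n:ℤ) + 2 ≤ x1 by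
        have := min_le_right z0 (x1 - 2); omega))
    · exact Or.inl he
  · -- pc3'
    intro p q hpq x1 x2 h1 hU
    have hA1 : ∀ n, memA z0 (p, x1 n) := fun n => (hU n).2.1
    have hA2 : memA z0 (q, x2) := (hU 0).2.2
    have hp : p.1 % 2 = 1 := odd_of_mono h1 hA1
    refine ⟨fun n => min z0 (x2 - 2) - n, anti_sub _, fun n => ?_⟩
    dsimp only
    obtain ⟨-, b, ⟨j1, hb1, hr1⟩, ⟨j2, hb2, hr2⟩⟩ := (hU n).1
    obtain ⟨hr1', hp1'⟩ := region_succ x hp hr1 (min z0 (x2 - 2) - n)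
    refine sort2_mem b j1 j2 hb1 hb2 hr1' hr2
      (Or.inr ⟨hp1', show min z0 (x2 - 2) - (n:ℤ) ≤ z0 by
        have := min_le_left z0 (x2 - 2); omega⟩) hA2 ?_
    rcases eq_or_ne (cycSucc p) q with he | he
    · exact Or.inr (Or.inl (show min z0 (x2 - 2) - (n:ℤ) + 2 ≤ x2 by
        have := min_le_right z0 (x2 - 2); omega))
    · exact Or.inl he
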